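/- Let g be the semidirect product Lie algebra gl₂ ⋉ V_{k+1}, where gl₂ acts on homogeneous polynomials of degree k+1 by derivations, V_{k+1} is abelian, and set g₁ = ℂY, g₀ = ℂH + ℂZ, g₋₁ = ℂX + ℂv_{k+1}, and g₋ᵢ = ℂv_{k+2−i} for 2 ≤ i ≤ k+2. Then this decomposition is a Lie algebra gradation: [gᵢ, gⱼ] ⊆ g_{i+j} for all i, j (with g_m = 0 when m is outside the range [−k−2, 1]). -/

import Mathlib

/-
The bracket is bilinear and each gᵢ is spanned by some of the basis vectors Y, H, Z, X, v_j,
so it suffices to bracket two basis vectors. Give v_j the degree j − k − 2 (this recovers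
v_{k+1} ∈ g₋₁ and g₋ᵢ = ℂv_{k+2−i}). Then every such bracket is a multiple of a basis vector
of the summed degree: [X, Y] = H, [H, X] = 2X, [H, Y] = −2Y, Z is central in gl₂,
X v_j = v_{j−1}, Y v_j = (k+1−j)(j+1) v_{j+1}, H v_j = (k+1−2j) v_j, Z v_j = (k+1) v_j,
and V_{k+1} is abelian. At the ends of the range, X v₀ = 0 and Y v_{k+1} = 0.
-/

/- STATEMENT 4: g = gl₂ ⋉ V_{k+1} with the gradation g₁ = ℂY, g₀ = ℂH + ℂZ,
g₋₁ = ℂX + ℂv_{k+1}, g₋ᵢ = ℂv_{k+2−i} (2 ≤ i ≤ k+2) is a graded Lie algebra: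
[gᵢ, gⱼ] ⊆ g_{i+j} (with g_m = 0 outside [−k−2, 1]).
We realize g faithfully as matrices acting on V_{k+1} ⊕ ℂ (basis v₀,…,v_{k+1} of V_{k+1},
last coordinate for ℂ): a pair (A, p) acts by (w, c) ↦ (A·w + c·p, 0), which identifies the
semidirect product bracket [(A,p),(B,q)] = ([A,B], A(q) − B(p)) with the matrix commutator.
X, Y, H, Z act on the basis by X v_i = v_{i−1}, Y v_i = (k+1−i)(i+1) v_{i+1},
H v_i = (k+1−2i) v_i, Z v_i = (k+1) v_i. -/

noncomputable section

def MX (k : ℕ) : Matrix (Fin (k+3)) (Fin (k+3)) ℂ :=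
  Matrix.of fun r c => if r.val + 1 = c.val ∧ c.val ≤ k + 1 then 1 else 0
def MY (k : ℕ) : Matrix (Fin (k+3)) (Fin (k+3)) ℂ :=
  Matrix.of fun r c =>
    if r.val = c.val + 1 ∧ r.val ≤ k + 1 then (((k + 1 - c.val) * (c.val + 1) : ℕ) : ℂ) else 0
def MH (k : ℕ) : Matrix (Fin (k+3)) (Fin (k+3)) ℂ :=
  Matrix.of fun r c => if r = c ∧ r.val ≤ k + 1 then ((k : ℂ) + 1 - 2 * (r.val : ℂ)) else 0
def MZ (k : ℕ) : Matrix (Fin (k+3)) (Fin (k+3)) ℂ :=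
  Matrix.of fun r c => if r = c ∧ r.val ≤ k + 1 then ((k : ℂ) + 1) else 0
/-- The element v_j of the abelian ideal V_{k+1}. -/
def Mv (k : ℕ) (j : ℕ) : Matrix (Fin (k+3)) (Fin (k+3)) ℂ :=
  Matrix.of fun r c => if r.val = j ∧ c.val = k + 2 then 1 else 0

/-- The gradation of g = gl₂ ⋉ V_{k+1}. -/
def gr (k : ℕ) : ℤ → Submodule ℂ (Matrix (Fin (k+3)) (Fin (k+3)) ℂ) := fun i =>
  if i = 1 then Submodule.span ℂ {MY k}
  else if i = 0 then Submodule.span ℂ {MH k, MZ k}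
  else if i = -1 then Submodule.span ℂ {MX k, Mv k (k+1)}
  else if -(k : ℤ) - 2 ≤ i ∧ i ≤ -2 then Submodule.span ℂ {Mv k (k + 2 - i.natAbs)}
  else ⊥

theorem Submodule.lie_mem_of_mem_span {R L : Type*} [CommRing R] [LieRing L] [LieAlgebra R L]
    {s t : Set L} {p : Submodule R L} (h : ∀ x ∈ s, ∀ y ∈ t, ⁅x, y⁆ ∈ p) {a b : L}
    (ha : a ∈ Submodule.span R s) (hb : b ∈ Submodule.span R t) : ⁅a, b⁆ ∈ p := by
  have hmem := Submodule.apply_mem_map₂ (LieModule.toEnd R L L : L →ₗ[R] L →ₗ[R] L) ha hb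
  rw [Submodule.map₂_span_span] at hmem
  refine Submodule.span_le.mpr ?_ hmem
  rintro _ ⟨x, hx, y, hy, rfl⟩
  exact h x hx y hy

theorem Matrix.lie_diagonal_apply {n R : Type*} [Fintype n] [DecidableEq n] [CommRing R]
    (d : n → R) (A : Matrix n n R) (r c : n) :
    ⁅Matrix.diagonal d, A⁆ r c = (d r - d c) * A r c := by
  rw [Ring.lie_def, Matrix.sub_apply, Matrix.diagonal_mul, Matrix.mul_diagonal]; ring

open Matrix

section MatrixModel

variable (k : ℕ)

lemma MH_eq_diagonal : MH k =
    diagonal fun r : Fin (k + 3) => if (r : ℕ) ≤ k + 1 then (k : ℂ) + 1 - 2 * (r : ℕ) else 0 := by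
  ext r c
  simp only [MH, of_apply, diagonal_apply]
  grind

lemma MZ_eq_diagonal :
    MZ k = diagonal fun r : Fin (k + 3) => if (r : ℕ) ≤ k + 1 then (k : ℂ) + 1 else 0 := by
  ext r c
  simp only [MZ, of_apply, diagonal_apply]
  grind

lemma lie_MH_MX : ⁅MH k, MX k⁆ = (2 : ℂ) • MX k := by
  ext r c
  rw [MH_eq_diagonal, Matrix.lie_diagonal_apply]
  by_cases h : (r : ℕ) + 1 = c ∧ (c : ℕ) ≤ k + 1
  · have hc : ((c : ℕ) : ℂ) = (r : ℕ) + 1 := by exact_mod_cast h.1.symm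
    simp [MX, h, hc, show (r : ℕ) ≤ k + 1 by omega]
    ring
  · simp [MX, h]

lemma lie_MH_MY : ⁅MH k, MY k⁆ = (-2 : ℂ) • MY k := by
  ext r c
  rw [MH_eq_diagonal, Matrix.lie_diagonal_apply]
  by_cases h : (r : ℕ) = c + 1 ∧ (r : ℕ) ≤ k + 1
  · have hr : ((r : ℕ) : ℂ) = (c : ℕ) + 1 := by exact_mod_cast h.1
    simp only [MY, of_apply, Matrix.smul_apply, smul_eq_mul, if_pos h, if_pos h.2,
      if_pos (show (c : ℕ) ≤ k + 1 by omega), hr]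
    ring
  · simp [MY, h]

lemma lie_MZ_MX : ⁅MZ k, MX k⁆ = 0 := by
  ext r c
  rw [MZ_eq_diagonal, Matrix.lie_diagonal_apply]
  by_cases h : (r : ℕ) + 1 = c ∧ (c : ℕ) ≤ k + 1
  · simp [MX, h, show (r : ℕ) ≤ k + 1 by omega]
  · simp [MX, h]

lemma lie_MZ_MY : ⁅MZ k, MY k⁆ = 0 := by
  ext r c
  rw [MZ_eq_diagonal, Matrix.lie_diagonal_apply]
  by_cases h : (r : ℕ) = c + 1 ∧ (r : ℕ) ≤ k + 1
  · simp only [MY, of_apply, Matrix.zero_apply, if_pos h, if_pos h.2,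
      if_pos (show (c : ℕ) ≤ k + 1 by omega), sub_self, zero_mul]
  · simp [MY, h]

lemma lie_MH_MZ : ⁅MH k, MZ k⁆ = 0 := by
  rw [MH_eq_diagonal, MZ_eq_diagonal, Ring.lie_def, sub_eq_zero]
  exact commute_diagonal _ _

lemma mul_Mv_apply (A : Matrix (Fin (k + 3)) (Fin (k + 3)) ℂ) {j : ℕ} (hj : j < k + 3)
    (r c : Fin (k + 3)) : (A * Mv k j) r c = if (c : ℕ) = k + 2 then A r ⟨j, hj⟩ else 0 := by
  rw [mul_apply, Finset.sum_eq_single ⟨j, hj⟩]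
  · simp [Mv]
  · intro s _ hs
    simp [Mv, Fin.ext_iff] at hs ⊢
    omega
  · simp

lemma Mv_mul_apply (j : ℕ) (A : Matrix (Fin (k + 3)) (Fin (k + 3)) ℂ) (r c : Fin (k + 3)) :
    (Mv k j * A) r c = if (r : ℕ) = j then A (Fin.last _) c else 0 := by
  rw [mul_apply, Finset.sum_eq_single (Fin.last _)]
  · simp [Mv]
  · intro s _ hs
    simp [Mv, Fin.ext_iff] at hs ⊢
    omega
  · simp

lemma lie_Mv_apply (A : Matrix (Fin (k + 3)) (Fin (k + 3)) ℂ)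
    (hA : ∀ c, A (Fin.last _) c = 0) {j : ℕ} (hj : j < k + 3) (r c : Fin (k + 3)) :
    ⁅A, Mv k j⁆ r c = if (c : ℕ) = k + 2 then A r ⟨j, hj⟩ else 0 := by
  rw [Ring.lie_def, Matrix.sub_apply, mul_Mv_apply k A hj, Mv_mul_apply, hA, ite_self, sub_zero]

lemma MX_apply_last (c : Fin (k + 3)) : MX k (Fin.last _) c = 0 := by
  simp [MX]; omega
lemma MY_apply_last (c : Fin (k + 3)) : MY k (Fin.last _) c = 0 := by
  simp [MY]
lemma MH_apply_last (c : Fin (k + 3)) : MH k (Fin.last _) c = 0 := by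
  simp [MH]
lemma MZ_apply_last (c : Fin (k + 3)) : MZ k (Fin.last _) c = 0 := by
  simp [MZ]
lemma Mv_apply_last {j : ℕ} (hj : j ≤ k + 1) (c : Fin (k + 3)) :
    Mv k j (Fin.last _) c = 0 := by
  simp [Mv]; omega

lemma lie_MX_Mv {j : ℕ} (h1 : 1 ≤ j) (hj : j ≤ k + 1) : ⁅MX k, Mv k j⁆ = Mv k (j - 1) := by
  ext r c
  rw [lie_Mv_apply k _ (MX_apply_last k) (by omega)]
  simp only [MX, Mv, of_apply]
  grind

lemma lie_MX_Mv_zero : ⁅MX k, Mv k 0⁆ = 0 := by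
  ext r c
  rw [lie_Mv_apply k _ (MX_apply_last k) (by omega)]
  simp [MX]

lemma lie_MY_Mv {j : ℕ} (hj : j ≤ k + 1) :
    ⁅MY k, Mv k j⁆ = (((k + 1 - j) * (j + 1) : ℕ) : ℂ) • Mv k (j + 1) := by
  ext r c
  rw [lie_Mv_apply k _ (MY_apply_last k) (by omega)]
  obtain hj | rfl := hj.lt_or_eq
  · simp only [MY, Mv, of_apply, Matrix.smul_apply, smul_eq_mul]
    grind
  · simp [MY]

lemma lie_MH_Mv {j : ℕ} (hj : j ≤ k + 1) :
    ⁅MH k, Mv k j⁆ = ((k : ℂ) + 1 - 2 * j) • Mv k j := by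
  ext r c
  rw [lie_Mv_apply k _ (MH_apply_last k) (by omega)]
  simp only [MH, Mv, of_apply, Matrix.smul_apply, smul_eq_mul, Fin.ext_iff]
  grind

lemma lie_MZ_Mv {j : ℕ} (hj : j ≤ k + 1) :
    ⁅MZ k, Mv k j⁆ = ((k : ℂ) + 1) • Mv k j := by
  ext r c
  rw [lie_Mv_apply k _ (MZ_apply_last k) (by omega)]
  simp only [MZ, Mv, of_apply, Matrix.smul_apply, smul_eq_mul, Fin.ext_iff]
  grind

lemma lie_Mv_Mv {i j : ℕ} (hi : i ≤ k + 1) (hj : j ≤ k + 1) : ⁅Mv k i, Mv k j⁆ = 0 := by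
  ext r c
  rw [lie_Mv_apply k _ (Mv_apply_last k hi) (by omega)]
  simp [Mv]
  omega

lemma MX_mul_apply (A : Matrix (Fin (k + 3)) (Fin (k + 3)) ℂ) (r c : Fin (k + 3)) :
    (MX k * A) r c = if h : (r : ℕ) ≤ k then A ⟨r + 1, by omega⟩ c else 0 := by
  rw [mul_apply]
  split_ifs with h
  · rw [Finset.sum_eq_single ⟨r + 1, by omega⟩]
    · simp [MX]; omega
    · intro s _ hs
      simp [MX, Fin.ext_iff] at hs ⊢
      omega
    · simp
  · refine Finset.sum_eq_zero fun s _ => ?_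
    simp [MX]
    omega

lemma mul_MX_apply (A : Matrix (Fin (k + 3)) (Fin (k + 3)) ℂ) (r c : Fin (k + 3)) :
    (A * MX k) r c = if h : 1 ≤ (c : ℕ) ∧ (c : ℕ) ≤ k + 1 then A r ⟨c - 1, by omega⟩ else 0 := by
  rw [mul_apply]
  split_ifs with h
  · rw [Finset.sum_eq_single ⟨c - 1, by omega⟩]
    · simp [MX]; omega
    · intro s _ hs
      simp [MX, Fin.ext_iff] at hs ⊢
      omega
    · simp
  · refine Finset.sum_eq_zero fun s _ => ?_
    simp [MX]
    omega

lemma lie_MX_MY : ⁅MX k, MY k⁆ = MH k := by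
  ext r c
  rw [Ring.lie_def, Matrix.sub_apply, MX_mul_apply, mul_MX_apply]
  simp only [MY, MH, of_apply]
  by_cases hrc : r = c
  · subst hrc
    obtain h0 | hmid | htop | hlast : (r : ℕ) = 0 ∨ (1 ≤ (r : ℕ) ∧ (r : ℕ) ≤ k) ∨
        (r : ℕ) = k + 1 ∨ (r : ℕ) = k + 2 := by omega
    · simp [h0]
    · simp (disch := omega) [hmid, show (r : ℕ) ≤ k + 1 by omega, Nat.cast_sub]
      ring
    · simp [htop]
      ring
    · simp [hlast]
  · rw [Fin.ext_iff] at hrc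
    split_ifs <;> first | (exfalso; omega) | simp

end MatrixModel

section Grading

variable {k : ℕ} {i j : ℤ} {x y : Matrix (Fin (k + 3)) (Fin (k + 3)) ℂ}

theorem gr_one : gr k 1 = Submodule.span ℂ {MY k} := by simp [gr]
theorem gr_zero : gr k 0 = Submodule.span ℂ {MH k, MZ k} := by simp [gr]
theorem gr_neg_one : gr k (-1) = Submodule.span ℂ {MX k, Mv k (k + 1)} := by simp [gr]
theorem gr_of_le_neg_two (hi : -(k : ℤ) - 2 ≤ i) (hi' : i ≤ -2) :
    gr k i = Submodule.span ℂ {Mv k (k + 2 - i.natAbs)} := by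
  rw [gr, if_neg (by omega), if_neg (by omega), if_neg (by omega), if_pos ⟨hi, hi'⟩]

inductive IsBasisVector (k : ℕ) : ℤ → Matrix (Fin (k + 3)) (Fin (k + 3)) ℂ → Prop
  | Y : IsBasisVector k 1 (MY k)
  | H : IsBasisVector k 0 (MH k)
  | Z : IsBasisVector k 0 (MZ k)
  | X : IsBasisVector k (-1) (MX k)
  | v {i : ℤ} {j : ℕ} (hj : j ≤ k + 1) (hij : (j : ℤ) = i + k + 2) : IsBasisVector k i (Mv k j)

theorem IsBasisVector.mem_gr (hx : IsBasisVector k i x) : x ∈ gr k i := by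
  cases hx with
  | Y => exact gr_one ▸ Submodule.mem_span_singleton_self _
  | H => exact gr_zero ▸ Submodule.subset_span (by simp)
  | Z => exact gr_zero ▸ Submodule.subset_span (by simp)
  | X => exact gr_neg_one ▸ Submodule.subset_span (by simp)
  | @v i j hj hij =>
    obtain rfl | hj := hj.eq_or_lt
    · obtain rfl : i = -1 := by omega
      exact gr_neg_one ▸ Submodule.subset_span (by simp)
    · rw [gr_of_le_neg_two (by omega) (by omega), show k + 2 - i.natAbs = j by omega]
      exact Submodule.mem_span_singleton_self _

theorem gr_le_span_isBasisVector : gr k i ≤ Submodule.span ℂ {x | IsBasisVector k i x} := by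
  unfold gr
  split_ifs with h1 h0 hm1 hlow
  · subst h1
    exact Submodule.span_mono (by simpa using IsBasisVector.Y)
  · subst h0
    exact Submodule.span_mono (by simpa [Set.insert_subset_iff] using ⟨.H, .Z⟩)
  · subst hm1
    exact Submodule.span_mono
      (by simpa [Set.insert_subset_iff] using ⟨.X, .v le_rfl (by omega)⟩)
  · exact Submodule.span_mono (by simpa using IsBasisVector.v (by omega) (by omega))
  · exact bot_le

end Grading

section Brackets

attribute [local instance] LieRing.ofAssociativeRing

variable {k : ℕ} {i j : ℤ} {x y : Matrix (Fin (k + 3)) (Fin (k + 3)) ℂ}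

theorem lie_mem_gr_swap (h : ⁅y, x⁆ ∈ gr k (j + i)) : ⁅x, y⁆ ∈ gr k (i + j) := by
  rw [← lie_skew, add_comm i j]
  exact neg_mem h

theorem lie_MH_mem_gr (hy : IsBasisVector k j y) : ⁅MH k, y⁆ ∈ gr k (0 + j) := by
  cases hy with
  | Y => rw [lie_MH_MY]; exact Submodule.smul_mem _ _ IsBasisVector.Y.mem_gr
  | H => rw [lie_self]; exact zero_mem _
  | Z => rw [lie_MH_MZ]; exact zero_mem _
  | X => rw [lie_MH_MX]; exact Submodule.smul_mem _ _ IsBasisVector.X.mem_gr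
  | v hj hij =>
    rw [lie_MH_Mv k hj]
    exact Submodule.smul_mem _ _ (IsBasisVector.v hj (by omega)).mem_gr

theorem lie_MZ_mem_gr (hy : IsBasisVector k j y) : ⁅MZ k, y⁆ ∈ gr k (0 + j) := by
  cases hy with
  | Y => rw [lie_MZ_MY]; exact zero_mem _
  | H => exact lie_mem_gr_swap (lie_MH_mem_gr .Z)
  | Z => rw [lie_self]; exact zero_mem _
  | X => rw [lie_MZ_MX]; exact zero_mem _
  | v hj hij =>
    rw [lie_MZ_Mv k hj]
    exact Submodule.smul_mem _ _ (IsBasisVector.v hj (by omega)).mem_gr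

theorem lie_MX_mem_gr (hy : IsBasisVector k j y) : ⁅MX k, y⁆ ∈ gr k (-1 + j) := by
  cases hy with
  | Y => rw [lie_MX_MY]; exact IsBasisVector.H.mem_gr
  | H => exact lie_mem_gr_swap (lie_MH_mem_gr .X)
  | Z => exact lie_mem_gr_swap (lie_MZ_mem_gr .X)
  | X => rw [lie_self]; exact zero_mem _
  | @v _ j hj hij =>
    obtain rfl | hj0 := j.eq_zero_or_pos
    · rw [lie_MX_Mv_zero]; exact zero_mem _
    · rw [lie_MX_Mv k hj0 hj]; exact (IsBasisVector.v (by omega) (by omega)).mem_gr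

theorem lie_MY_mem_gr (hy : IsBasisVector k j y) : ⁅MY k, y⁆ ∈ gr k (1 + j) := by
  cases hy with
  | Y => rw [lie_self]; exact zero_mem _
  | H => exact lie_mem_gr_swap (lie_MH_mem_gr .Y)
  | Z => exact lie_mem_gr_swap (lie_MZ_mem_gr .Y)
  | X => exact lie_mem_gr_swap (lie_MX_mem_gr .Y)
  | v hj hij =>
    rw [lie_MY_Mv k hj]
    obtain rfl | hj := hj.eq_or_lt
    · rw [Nat.sub_self, zero_mul, Nat.cast_zero, zero_smul]; exact zero_mem _
    · exact Submodule.smul_mem _ _ (IsBasisVector.v (by omega) (by omega)).mem_gr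

theorem lie_Mv_mem_gr {j' : ℕ} (hj : j' ≤ k + 1) (hij : (j' : ℤ) = i + k + 2)
    (hy : IsBasisVector k j y) : ⁅Mv k j', y⁆ ∈ gr k (i + j) := by
  cases hy with
  | Y => exact lie_mem_gr_swap (lie_MY_mem_gr (.v hj hij))
  | H => exact lie_mem_gr_swap (lie_MH_mem_gr (.v hj hij))
  | Z => exact lie_mem_gr_swap (lie_MZ_mem_gr (.v hj hij))
  | X => exact lie_mem_gr_swap (lie_MX_mem_gr (.v hj hij))
  | v hj' _ => rw [lie_Mv_Mv k hj hj']; exact zero_mem _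

theorem IsBasisVector.lie_mem_gr (hx : IsBasisVector k i x) (hy : IsBasisVector k j y) :
    ⁅x, y⁆ ∈ gr k (i + j) := by
  cases hx with
  | Y => exact lie_MY_mem_gr hy
  | H => exact lie_MH_mem_gr hy
  | Z => exact lie_MZ_mem_gr hy
  | X => exact lie_MX_mem_gr hy
  | v hj hij => exact lie_Mv_mem_gr hj hij hy

theorem lie_mem_gr {a b : Matrix (Fin (k + 3)) (Fin (k + 3)) ℂ} (ha : a ∈ gr k i)
    (hb : b ∈ gr k j) : ⁅a, b⁆ ∈ gr k (i + j) :=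
  Submodule.lie_mem_of_mem_span (fun _ hx _ hy => hx.lie_mem_gr hy)
    (gr_le_span_isBasisVector ha) (gr_le_span_isBasisVector hb)

end Brackets

theorem stmt4_general (k : ℕ) :
    ∀ i j : ℤ, ∀ a ∈ gr k i, ∀ b ∈ gr k j, ⁅a, b⁆ ∈ gr k (i + j) :=
  fun _ _ _ ha _ hb => lie_mem_gr ha hb

theorem stmt4 (k : ℕ) (hk : 2 ≤ k) :
    ∀ i j : ℤ, ∀ a ∈ gr k i, ∀ b ∈ gr k j, ⁅a, b⁆ ∈ gr k (i + j) :=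
  stmt4_general k
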